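/- arXiv:2104.09374 — 2 statements merged into one kernel-verified Lean document; each statement's English description precedes it below -/
import Mathlib

section
/- Define numbers ξ_{n,i} by ξ_{0,0} = 1, ξ_{0,i} = 0 for i ≠ 0, and ξ_{n+1,i} = (1+2n−6i)·ξ_{n,i} + (n−2i+2)·ξ_{n,i−1} − 4(i+1)·ξ_{n,i+1} for n ≥ 0 (terms with negative index being 0). Then for every n ≥ 0 and every real x, B̂_n(x) = Σ_{i=0}^{⌊n/2⌋} ξ_{n,i} · (−4x)^i · (1+x)^{n−2i}. -/
/-!
Both sides satisfy `f (n + 1) = (1 + n + x + n x²) f n + (1 - x) (1 + x²) f n'` with `f 0 = 1`.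

Every signed permutation of order `n + 1` arises exactly once from a signed permutation of order
`n` by negating all its entries after the first `p` and inserting `±(n + 1)` after the first `p`.
Moving a pair one position to the right flips the parity of its index and negating both entries
reverses their comparison, so all old pairs except the one at `p` keep their status. The new
pairs next to `±(n + 1)` are alternating descents or not according to the sign and the parity
of `p` only: for `p < n` the two signs contribute `0` and `2` new descents, for `p = n` they
contribute `0` and `1`. Summing `x ^ altdes` over `p` and the sign gives the recurrence for
`B̂ₙ`.

For the right-hand side the recurrence holds term by term: the operator sends
`(-4x)^i (1+x)^(n-2i)` to a combination of the terms of order `n + 1` with indices `i` and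
`i ± 1`, whose coefficients are exactly those in the recurrence defining `ξ`.
-/

open Finset

/-- Signed permutations of order `n` (the hyperoctahedral group), modeled as a
permutation of `Fin n` together with a sign for each position. -/
abbrev BSigned (n : ℕ) := Equiv.Perm (Fin n) × (Fin n → Bool)

/-- The word of a signed permutation: `bword σ j = σ(j)` for `1 ≤ j ≤ n`,
with the convention `σ(0) = 0`. -/
def bword {n : ℕ} (σ : BSigned n) (j : ℕ) : ℤ :=
  if h : 1 ≤ j ∧ j ≤ n then
    (if σ.2 ⟨j - 1, by omega⟩ then -1 else 1) * ((σ.1 ⟨j - 1, by omega⟩ : ℕ) + 1)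
  else 0

/-- The number of alternating descents of a signed permutation: the number of
`0 ≤ j ≤ n-1` such that `j` is even and `σ(j) < σ(j+1)`, or `j` is odd and `σ(j) > σ(j+1)`. -/
def altdesB {n : ℕ} (σ : BSigned n) : ℕ :=
  ((Finset.range n).filter (fun j => (Even j ∧ bword σ j < bword σ (j + 1)) ∨
      (Odd j ∧ bword σ (j + 1) < bword σ j))).card

/-- The type B alternating Eulerian number `B̂(n,k)`. -/
def Bhat (n k : ℕ) : ℕ :=
  (Finset.univ.filter (fun σ : BSigned n => altdesB σ = k)).card

/-- The type B alternating Eulerian polynomial `B̂_n(x)` as a real function. -/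
noncomputable def Bpoly (n : ℕ) (x : ℝ) : ℝ :=
  ∑ σ : BSigned n, x ^ altdesB σ

/-- The word of a permutation of `{1,…,n}`: `aword π j = π(j)` for `1 ≤ j ≤ n`,
with the convention `π(0) = 0`. -/
def aword {n : ℕ} (π : Equiv.Perm (Fin n)) (j : ℕ) : ℕ :=
  if h : 1 ≤ j ∧ j ≤ n then (π ⟨j - 1, by omega⟩ : ℕ) + 1 else 0

/-- The number of alternating descents of a permutation: the number of
`1 ≤ j ≤ n-1` such that `j` is odd and `π(j) > π(j+1)`, or `j` is even and `π(j) < π(j+1)`. -/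
def altdesA {n : ℕ} (π : Equiv.Perm (Fin n)) : ℕ :=
  ((Finset.Icc 1 (n - 1)).filter (fun j => (Odd j ∧ aword π (j + 1) < aword π j) ∨
      (Even j ∧ aword π j < aword π (j + 1)))).card

/-- The type A alternating Eulerian number `Â(n,k)`. -/
def Ahat (n k : ℕ) : ℕ :=
  (Finset.univ.filter (fun π : Equiv.Perm (Fin n) => altdesA π = k)).card

/-- The type A alternating Eulerian polynomial `Â_n(x)` as a real function. -/
noncomputable def Apoly (n : ℕ) (x : ℝ) : ℝ :=
  ∑ π : Equiv.Perm (Fin n), x ^ altdesA π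

/-- The number of left peaks of a permutation: indices `1 ≤ i ≤ n-1` with
`π(i-1) < π(i) > π(i+1)`, where `π(0) = 0`. -/
def lpk {n : ℕ} (π : Equiv.Perm (Fin n)) : ℕ :=
  ((Finset.Icc 1 (n - 1)).filter (fun i =>
      aword π (i - 1) < aword π i ∧ aword π (i + 1) < aword π i)).card

/-- `M n k` is the number of permutations of `{1,…,n}` with exactly `k` left peaks. -/
def M (n k : ℕ) : ℕ :=
  (Finset.univ.filter (fun π : Equiv.Perm (Fin n) => lpk π = k)).card

/-- The derivative polynomials for secant: `Q 0 = 1`,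
`Q (n+1) = x Q n + (1+x²) (Q n)'`. -/
noncomputable def Q : ℕ → Polynomial ℝ
  | 0 => 1
  | n + 1 => Polynomial.X * Q n + (1 + Polynomial.X ^ 2) * Polynomial.derivative (Q n)

/-- The coefficients `ξ_{n,i}` (terms with negative index vanish). -/
def xi : ℕ → ℤ → ℤ
  | 0, i => if i = 0 then 1 else 0
  | n + 1, i => (1 + 2 * (n : ℤ) - 6 * i) * xi n i + ((n : ℤ) - 2 * i + 2) * xi n (i - 1)
      - 4 * (i + 1) * xi n (i + 1)

/-- The polynomial `ξ_n(x) = Σ_{i=0}^{⌊n/2⌋} ξ_{n,i} x^i` as a real function. -/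
noncomputable def xiPoly (n : ℕ) (x : ℝ) : ℝ :=
  ∑ i ∈ Finset.range (n / 2 + 1), (xi n i : ℝ) * x ^ i

/-- A snake: a signed permutation with `σ(0) < σ(1) > σ(2) < σ(3) > ⋯`. -/
def IsSnake {n : ℕ} (σ : BSigned n) : Prop :=
  ∀ i : ℕ, (2 * i + 1 ≤ n → bword σ (2 * i) < bword σ (2 * i + 1)) ∧
    (2 * i + 2 ≤ n → bword σ (2 * i + 2) < bword σ (2 * i + 1))

/-- The Springer number `s_n`: the number of snakes of order `n`. -/
noncomputable def springer (n : ℕ) : ℕ := Nat.card {σ : BSigned n // IsSnake σ}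

/-- An alternating (down-up) permutation: `π(1) > π(2) < π(3) > ⋯`. -/
def IsAlternating {m : ℕ} (π : Equiv.Perm (Fin m)) : Prop :=
  ∀ j : ℕ, 1 ≤ j → j + 1 ≤ m →
    (Odd j → aword π (j + 1) < aword π j) ∧ (Even j → aword π j < aword π (j + 1))

/-- The secant number `E_{2n}`: the number of alternating permutations of `{1,…,2n}`. -/
noncomputable def secantNumber (n : ℕ) : ℕ :=
  Nat.card {π : Equiv.Perm (Fin (2 * n)) // IsAlternating π}

theorem xi_eq_zero_of_neg (n : ℕ) {i : ℤ} (hi : i < 0) : xi n i = 0 := by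
  induction n generalizing i with
  | zero => rw [xi, if_neg hi.ne]
  | succ n ih =>
    rw [xi, ih hi, ih (show i - 1 < 0 by omega)]
    rcases (show i + 1 < 0 ∨ i + 1 = 0 by omega) with h | h
    · simp [ih h]
    · simp [h]

theorem xi_eq_zero_of_lt (n : ℕ) {i : ℤ} (hi : (n : ℤ) < 2 * i) : xi n i = 0 := by
  induction n generalizing i with
  | zero => rw [xi, if_neg (by omega)]
  | succ n ih =>
    rw [xi, ih (by omega), ih (show (n : ℤ) < 2 * (i + 1) by omega)]
    rcases (show (n : ℤ) < 2 * (i - 1) ∨ (n : ℤ) - 2 * i + 2 = 0 by omega) with h | h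
    · simp [ih h]
    · simp [h]

theorem sum_range_xi_mul_of_lt (n : ℕ) {N : ℕ} (hN : n / 2 < N) (g : ℕ → ℝ) :
    ∑ i ∈ range N, (xi n i : ℝ) * g i =
      ∑ i ∈ range (n / 2 + 1), (xi n i : ℝ) * g i := by
  refine (sum_subset (range_subset_range.2 hN) fun i _ hi => ?_).symm
  rw [mem_range, not_lt] at hi
  rw [xi_eq_zero_of_lt n (by omega), Int.cast_zero, zero_mul]

theorem sum_range_xi_succ_mul (n : ℕ) (f : ℕ → ℝ) :
    ∑ i ∈ range ((n + 1) / 2 + 1), (xi (n + 1) i : ℝ) * f i =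
      ∑ i ∈ range (n / 2 + 1), (xi n i : ℝ) *
        ((1 + 2 * n - 6 * i) * f i + (n - 2 * i) * f (i + 1) - 4 * i * f (i - 1)) := by
  set M := n / 2 + 1
  -- Reindex the parts with `ξ n (i - 1)` and `ξ n (i + 1)`: the boundary terms contain
  -- `ξ n (-1)`, `ξ n M`, `ξ n (M + 1)`, or the factor `i = 0` in front of a junk `f (0 - 1)`.
  have hprev : ∑ i ∈ range (M + 1), ((n : ℝ) - 2 * i + 2) * xi n ((i : ℤ) - 1) * f i =
      ∑ i ∈ range (M + 1), (xi n i : ℝ) * ((n - 2 * i) * f (i + 1)) := by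
    rw [sum_range_succ', sum_range_succ _ M, xi_eq_zero_of_lt n (i := M) (by omega)]
    push_cast
    rw [xi_eq_zero_of_neg n (by omega)]
    simp only [Int.cast_zero, mul_zero, zero_mul, add_zero, add_sub_cancel_right]
    exact sum_congr rfl fun i _ => by ring
  have hnext : ∑ i ∈ range (M + 1), 4 * ((i : ℝ) + 1) * xi n ((i : ℤ) + 1) * f i =
      ∑ i ∈ range (M + 1), (xi n i : ℝ) * (4 * i * f (i - 1)) := by
    rw [sum_range_succ, sum_range_succ' _ M]
    push_cast
    rw [xi_eq_zero_of_lt n (i := M + 1) (by omega)]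
    simp only [Int.cast_zero, mul_zero, zero_mul, add_zero]
    exact sum_congr rfl fun i _ => by ring
  rw [← sum_range_xi_mul_of_lt (n + 1) (N := M + 1) (by omega),
    ← sum_range_xi_mul_of_lt n (N := M + 1) (by omega)]
  simp only [xi]
  push_cast
  calc _ = ∑ i ∈ range (M + 1), (xi n i : ℝ) * ((1 + 2 * n - 6 * i) * f i)
          + ∑ i ∈ range (M + 1), ((n : ℝ) - 2 * i + 2) * xi n ((i : ℤ) - 1) * f i
          - ∑ i ∈ range (M + 1), 4 * ((i : ℝ) + 1) * xi n ((i : ℤ) + 1) * f i := by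
        rw [← sum_add_distrib, ← sum_sub_distrib]
        exact sum_congr rfl fun i _ => by ring
    _ = _ := by
        rw [hprev, hnext, ← sum_add_distrib, ← sum_sub_distrib]
        exact sum_congr rfl fun i _ => by ring

def gammaTerm (n i : ℕ) (x : ℝ) : ℝ := (-4 * x) ^ i * (1 + x) ^ (n - 2 * i)

theorem hasDerivAt_gammaTerm (n i : ℕ) (x : ℝ) :
    HasDerivAt (gammaTerm n i)
      (-4 * i * (-4 * x) ^ (i - 1) * (1 + x) ^ (n - 2 * i)
        + (n - 2 * i : ℕ) * (-4 * x) ^ i * (1 + x) ^ (n - 2 * i - 1)) x := by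
  have hu : HasDerivAt (fun y : ℝ => (-4 * y) ^ i) (i * (-4 * x) ^ (i - 1) * -4) x := by
    simpa using ((hasDerivAt_id x).const_mul (-4)).fun_pow i
  have hv : HasDerivAt (fun y : ℝ => (1 + y) ^ (n - 2 * i))
      ((n - 2 * i : ℕ) * (1 + x) ^ (n - 2 * i - 1)) x := by
    simpa using ((hasDerivAt_id x).const_add 1).fun_pow (n - 2 * i)
  exact (hu.fun_mul hv).congr_deriv (by ring)

theorem gammaTerm_recurrence {n i : ℕ} (hi : 2 * i ≤ n) (x : ℝ) :
    (1 + n + x + n * x ^ 2) * gammaTerm n i x + (1 - x) * (1 + x ^ 2) * deriv (gammaTerm n i) x =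
      (1 + 2 * n - 6 * i) * gammaTerm (n + 1) i x + (n - 2 * i) * gammaTerm (n + 1) (i + 1) x
        - 4 * i * gammaTerm (n + 1) (i - 1) x := by
  rw [(hasDerivAt_gammaTerm n i x).deriv]
  obtain ⟨m, rfl⟩ := Nat.exists_eq_add_of_le hi
  simp only [gammaTerm, show 2 * i + m - 2 * i = m by omega,
    show 2 * i + m + 1 - 2 * i = m + 1 by omega, show 2 * i + m + 1 - 2 * (i + 1) = m - 1 by omega]
  rcases i with _ | i <;> rcases m with _ | m <;>
    simp only [Nat.add_sub_cancel, Nat.zero_sub,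
      show ∀ a b : ℕ, 2 * (a + 1) + b + 1 - 2 * a = b + 3 by omega,
      show ∀ a : ℕ, 2 * (a + 1) + 1 - 2 * a = 3 by omega] <;>
    push_cast <;> ring

def gammaExpansion (n : ℕ) (x : ℝ) : ℝ :=
  ∑ i ∈ range (n / 2 + 1), (xi n i : ℝ) * gammaTerm n i x

theorem deriv_gammaExpansion (n : ℕ) (x : ℝ) :
    deriv (gammaExpansion n) x =
      ∑ i ∈ range (n / 2 + 1), (xi n i : ℝ) * deriv (gammaTerm n i) x :=
  (HasDerivAt.fun_sum fun i _ =>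
    (hasDerivAt_gammaTerm n i x).differentiableAt.hasDerivAt.const_mul (xi n i : ℝ)).deriv

theorem gammaExpansion_succ (n : ℕ) (x : ℝ) :
    gammaExpansion (n + 1) x = (1 + n + x + n * x ^ 2) * gammaExpansion n x
      + (1 - x) * (1 + x ^ 2) * deriv (gammaExpansion n) x := by
  rw [gammaExpansion, sum_range_xi_succ_mul, deriv_gammaExpansion, gammaExpansion, mul_sum,
    mul_sum, ← sum_add_distrib]
  refine sum_congr rfl fun i hi => ?_
  rw [← gammaTerm_recurrence (by have := mem_range.mp hi; omega)]
  ring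

def IsAltDes (w : ℕ → ℤ) (j : ℕ) : Prop :=
  (Even j ∧ w j < w (j + 1)) ∨ (Odd j ∧ w (j + 1) < w j)

instance (w : ℕ → ℤ) : DecidablePred (IsAltDes w) := fun _ => by
  unfold IsAltDes; infer_instance

def insertNegTail (w : ℕ → ℤ) (p : ℕ) (v : ℤ) (j : ℕ) : ℤ :=
  if j ≤ p then w j else if j = p + 1 then v else -w (j - 1)

section insertNegTail

variable (w : ℕ → ℤ) (p : ℕ) (v : ℤ)

theorem insertNegTail_of_le {j : ℕ} (hj : j ≤ p) : insertNegTail w p v j = w j :=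
  if_pos hj

theorem insertNegTail_succ : insertNegTail w p v (p + 1) = v := by
  simp [insertNegTail]

theorem insertNegTail_of_succ_lt {j : ℕ} (hj : p + 1 < j) :
    insertNegTail w p v j = -w (j - 1) := by
  rw [insertNegTail, if_neg (by omega), if_neg (by omega)]

theorem isAltDes_insertNegTail_of_lt {j : ℕ} (hj : j < p) :
    IsAltDes (insertNegTail w p v) j ↔ IsAltDes w j := by
  rw [IsAltDes, IsAltDes, insertNegTail_of_le w p v hj.le, insertNegTail_of_le w p v hj]

theorem isAltDes_insertNegTail_add_two (k : ℕ) :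
    IsAltDes (insertNegTail w p v) (p + 2 + k) ↔ IsAltDes w (p + 1 + k) := by
  rw [IsAltDes, IsAltDes, insertNegTail_of_succ_lt w p v (by omega),
    insertNegTail_of_succ_lt w p v (by omega), neg_lt_neg_iff, neg_lt_neg_iff,
    show p + 2 + k = p + 1 + k + 1 by omega, Nat.even_add_one, Nat.odd_add_one,
    Nat.not_even_iff_odd, Nat.not_odd_iff_even, Nat.add_sub_cancel, Nat.add_sub_cancel]
  tauto

theorem card_isAltDes_insertNegTail_self :
    #{j ∈ range (p + 1) | IsAltDes (insertNegTail w p v) j} =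
      #{j ∈ range p | IsAltDes w j} + if IsAltDes (insertNegTail w p v) p then 1 else 0 := by
  rw [card_filter, card_filter, sum_range_succ]
  congr 1
  exact sum_congr rfl fun j hj => by
    simp only [isAltDes_insertNegTail_of_lt w p v (mem_range.mp hj)]

theorem card_isAltDes_insertNegTail {n : ℕ} (hp : p < n) :
    #{j ∈ range (n + 1) | IsAltDes (insertNegTail w p v) j} + (if IsAltDes w p then 1 else 0) =
      #{j ∈ range n | IsAltDes w j} + (if IsAltDes (insertNegTail w p v) p then 1 else 0)
        + if IsAltDes (insertNegTail w p v) (p + 1) then 1 else 0 := by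
  obtain ⟨m, rfl⟩ : ∃ m, n = p + 1 + m := ⟨n - (p + 1), by omega⟩
  have hlow : ∑ j ∈ range p, (if IsAltDes (insertNegTail w p v) j then 1 else 0) =
      ∑ j ∈ range p, if IsAltDes w j then 1 else 0 :=
    sum_congr rfl fun j hj => by
      simp only [isAltDes_insertNegTail_of_lt w p v (mem_range.mp hj)]
  have hhigh : ∑ k ∈ range m, (if IsAltDes (insertNegTail w p v) (p + 2 + k) then 1 else 0) =
      ∑ k ∈ range m, if IsAltDes w (p + 1 + k) then 1 else 0 :=
    sum_congr rfl fun k _ => by simp only [isAltDes_insertNegTail_add_two]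
  rw [card_filter, card_filter, show p + 1 + m + 1 = p + 2 + m by omega, sum_range_add _ (p + 2),
    sum_range_add _ (p + 1), sum_range_succ _ (p + 1), sum_range_succ _ p, sum_range_succ _ p,
    hlow, hhigh]
  ring

variable {w} {M : ℤ} (hw : ∀ j, |w j| < M)
include hw

theorem isAltDes_insertNegTail_pos :
    (IsAltDes (insertNegTail w p M) p ↔ Even p) ∧
      (IsAltDes (insertNegTail w p M) (p + 1) ↔ Even p) := by
  have h₀ := abs_lt.mp (hw p)
  have h₁ := abs_lt.mp (hw (p + 1))
  rw [IsAltDes, IsAltDes, insertNegTail_of_le w p _ le_rfl, insertNegTail_succ,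
    insertNegTail_of_succ_lt w p _ (by omega), Nat.add_sub_cancel, ← Nat.not_even_iff_odd,
    ← Nat.not_even_iff_odd, Nat.even_add_one]
  by_cases he : Even p <;>
    simp only [he, not_true_eq_false, not_false_eq_true, true_and, false_and, or_false,
      false_or, iff_true, iff_false, not_lt] <;> omega

theorem isAltDes_insertNegTail_neg :
    (IsAltDes (insertNegTail w p (-M)) p ↔ Odd p) ∧
      (IsAltDes (insertNegTail w p (-M)) (p + 1) ↔ Odd p) := by
  have h₀ := abs_lt.mp (hw p)
  have h₁ := abs_lt.mp (hw (p + 1))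
  rw [IsAltDes, IsAltDes, insertNegTail_of_le w p _ le_rfl, insertNegTail_succ,
    insertNegTail_of_succ_lt w p _ (by omega), Nat.add_sub_cancel, ← Nat.not_even_iff_odd,
    ← Nat.not_even_iff_odd, Nat.even_add_one]
  by_cases he : Even p <;>
    simp only [he, not_true_eq_false, not_false_eq_true, true_and, false_and, or_false,
      false_or, iff_true, iff_false, not_lt] <;> omega

end insertNegTail

section insertMax

variable {n : ℕ}

open Fin in
theorem insertNth_last_castSucc_injective (π : Equiv.Perm (Fin n)) (p : Fin (n + 1)) :
    Function.Injective (p.insertNth (last n) (castSucc ∘ π)) := by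
  intro a b h
  obtain ha | ⟨i, rfl⟩ := p.eq_self_or_eq_succAbove a <;>
    obtain hb | ⟨j, rfl⟩ := p.eq_self_or_eq_succAbove b
  · rw [ha, hb]
  · subst ha
    rw [insertNth_apply_same, insertNth_apply_succAbove] at h
    exact absurd h.symm (castSucc_ne_last _)
  · subst hb
    rw [insertNth_apply_same, insertNth_apply_succAbove] at h
    exact absurd h (castSucc_ne_last _)
  · rw [insertNth_apply_succAbove, insertNth_apply_succAbove] at h
    exact congrArg _ (π.injective (castSucc_injective _ h))

noncomputable def insertMaxPerm (π : Equiv.Perm (Fin n)) (p : Fin (n + 1)) :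
    Equiv.Perm (Fin (n + 1)) :=
  Equiv.ofBijective _ (Finite.injective_iff_bijective.mp (insertNth_last_castSucc_injective π p))

/-- Insert the entry `n + 1`, negated iff `ε`, after the first `p` entries, and negate every
later entry. -/
noncomputable def insertMax (σ : BSigned n) (p : Fin (n + 1)) (ε : Bool) : BSigned (n + 1) :=
  (insertMaxPerm σ.1 p, p.insertNth ε fun i => σ.2 i ^^ decide (p ≤ i.castSucc))

theorem bword_eq_zero_of_lt (σ : BSigned n) {j : ℕ} (hj : n < j) : bword σ j = 0 :=
  dif_neg (by omega)

theorem bword_succ (σ : BSigned n) (i : Fin n) :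
    bword σ (i + 1) = (if σ.2 i then -1 else 1) * ((σ.1 i : ℕ) + 1) := by
  rw [bword, dif_pos (by omega)]
  rfl

theorem abs_bword_lt (σ : BSigned n) (j : ℕ) : |bword σ j| < n + 1 := by
  rw [abs_lt, bword]
  split_ifs with h
  · have := (σ.1 ⟨j - 1, by omega⟩).isLt
    omega
  · have := (σ.1 ⟨j - 1, by omega⟩).isLt
    omega
  · omega

theorem bword_insertMax (σ : BSigned n) (p : Fin (n + 1)) (ε : Bool) :
    bword (insertMax σ p ε) = insertNegTail (bword σ) p (if ε then -(n + 1) else n + 1) := by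
  funext j
  rcases j with _ | j
  · exact (insertNegTail_of_le _ _ _ (Nat.zero_le _)).symm
  rcases lt_or_ge n j with hj | hj
  · rw [bword_eq_zero_of_lt _ (by omega), insertNegTail_of_succ_lt _ _ _ (by omega),
      bword_eq_zero_of_lt _ (by omega), neg_zero]
  obtain ⟨k, rfl⟩ : ∃ k : Fin (n + 1), (k : ℕ) = j := ⟨⟨j, by omega⟩, rfl⟩
  rw [bword_succ]
  obtain rfl | ⟨i, rfl⟩ := p.eq_self_or_eq_succAbove k
  · simp [insertMax, insertMaxPerm, insertNegTail_succ]
  have h₁ : (insertMax σ p ε).1 (p.succAbove i) = (σ.1 i).castSucc := by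
    simp [insertMax, insertMaxPerm]
  have h₂ : (insertMax σ p ε).2 (p.succAbove i) = (σ.2 i ^^ decide (p ≤ i.castSucc)) := by
    simp [insertMax]
  rw [h₁, h₂, Fin.val_castSucc]
  rcases lt_or_ge i.castSucc p with h | h
  · rw [Fin.succAbove_of_castSucc_lt _ _ h, insertNegTail_of_le _ _ _ (Fin.lt_def.mp h),
      Fin.val_castSucc, bword_succ, decide_eq_false h.not_ge, Bool.xor_false]
  · rw [Fin.succAbove_of_le_castSucc _ _ h,
      insertNegTail_of_succ_lt _ _ _ (by simpa using Fin.le_def.mp h),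
      Fin.val_succ, Nat.add_sub_cancel, bword_succ, decide_eq_true h, Bool.xor_true]
    cases σ.2 i <;> simp

theorem insertMax_injective :
    Function.Injective fun q : BSigned n × Fin (n + 1) × Bool => insertMax q.1 q.2.1 q.2.2 := by
  rintro ⟨⟨π, s⟩, p, ε⟩ ⟨⟨π', s'⟩, p', ε'⟩ h
  have hperm : (p.insertNth (Fin.last n) (Fin.castSucc ∘ π) : Fin (n + 1) → Fin (n + 1)) =
      p'.insertNth (Fin.last n) (Fin.castSucc ∘ π') :=
    congrArg (fun τ : BSigned (n + 1) => ⇑τ.1) h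
  obtain rfl : p = p' := by
    have hp := congrFun hperm p
    rw [Fin.insertNth_apply_same] at hp
    obtain h' | ⟨i, rfl⟩ := p'.eq_self_or_eq_succAbove p
    · exact h'
    · rw [Fin.insertNth_apply_succAbove] at hp
      exact absurd hp.symm (Fin.castSucc_ne_last _)
  have hsign : (p.insertNth ε fun i => s i ^^ decide (p ≤ i.castSucc) : Fin (n + 1) → Bool) =
      p.insertNth ε' fun i => s' i ^^ decide (p ≤ i.castSucc) :=
    congrArg Prod.snd h
  obtain ⟨-, hπ⟩ := Fin.insertNth_injective2 hperm
  obtain ⟨rfl, hs⟩ := Fin.insertNth_injective2 hsign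
  simp only [Prod.mk.injEq, and_true]
  refine ⟨Equiv.ext fun i => Fin.castSucc_injective _ (congrFun hπ i), funext fun i => ?_⟩
  simpa using congrFun hs i

theorem insertMax_bijective :
    Function.Bijective fun q : BSigned n × Fin (n + 1) × Bool => insertMax q.1 q.2.1 q.2.2 := by
  refine (Fintype.bijective_iff_injective_and_card _).mpr ⟨insertMax_injective, ?_⟩
  simp only [Fintype.card_prod, Fintype.card_perm, Fintype.card_fun, Fintype.card_fin,
    Fintype.card_bool, Nat.factorial_succ]
  ring

end insertMax

section altdesB

variable {n : ℕ}

theorem altdesB_eq_card (σ : BSigned n) : altdesB σ = #{j ∈ range n | IsAltDes (bword σ) j} :=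
  rfl

theorem altdesB_le (σ : BSigned n) : altdesB σ ≤ n :=
  (card_filter_le _ _).trans (card_range n).le

theorem sum_pow_altdesB_insertMax_last (σ : BSigned n) (x : ℝ) :
    ∑ ε, x ^ altdesB (insertMax σ (Fin.last n) ε) = (1 + x) * x ^ altdesB σ := by
  obtain ⟨hpos, -⟩ := isAltDes_insertNegTail_pos n (abs_bword_lt σ)
  obtain ⟨hneg, -⟩ := isAltDes_insertNegTail_neg n (abs_bword_lt σ)
  simp only [Fintype.sum_bool, altdesB_eq_card, bword_insertMax, Fin.val_last, if_true,
    Bool.false_eq_true, if_false, card_isAltDes_insertNegTail_self, hpos, hneg,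
    ← Nat.not_even_iff_odd]
  by_cases he : Even n <;>
    simp only [he, not_true_eq_false, not_false_eq_true, if_true, if_false] <;> ring

theorem sum_pow_altdesB_insertMax_of_lt (σ : BSigned n) {p : Fin (n + 1)} (hp : (p : ℕ) < n)
    (x : ℝ) : ∑ ε, x ^ altdesB (insertMax σ p ε) =
      (1 + x ^ 2) * x ^ (altdesB σ - if IsAltDes (bword σ) p then 1 else 0) := by
  obtain ⟨hpos₁, hpos₂⟩ := isAltDes_insertNegTail_pos p (abs_bword_lt σ)
  obtain ⟨hneg₁, hneg₂⟩ := isAltDes_insertNegTail_neg p (abs_bword_lt σ)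
  have ht := card_isAltDes_insertNegTail (bword σ) p (-(n + 1)) hp
  have hf := card_isAltDes_insertNegTail (bword σ) p (n + 1) hp
  simp only [hneg₁, hneg₂, ← altdesB_eq_card, ← Nat.not_even_iff_odd] at ht
  simp only [hpos₁, hpos₂, ← altdesB_eq_card] at hf
  simp only [Fintype.sum_bool, altdesB_eq_card (insertMax _ _ _), bword_insertMax, if_true,
    Bool.false_eq_true, if_false]
  set c := if IsAltDes (bword σ) p then 1 else 0
  by_cases he : Even (p : ℕ) <;>
    simp only [he, not_true_eq_false, not_false_eq_true, if_true, if_false, add_zero] at ht hf <;>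
    rw [Nat.eq_sub_of_add_eq ht, Nat.eq_sub_of_add_eq hf,
      show altdesB σ + 1 + 1 - c = altdesB σ - c + 2 by omega, pow_add] <;>
    ring

theorem sum_sum_pow_altdesB_insertMax (σ : BSigned n) (x : ℝ) :
    ∑ p, ∑ ε, x ^ altdesB (insertMax σ p ε) =
      (1 + x) * x ^ altdesB σ + (1 + x ^ 2) *
        (altdesB σ * x ^ (altdesB σ - 1) + (n - altdesB σ : ℕ) * x ^ altdesB σ) := by
  have hcard : #{j ∈ range n | ¬IsAltDes (bword σ) j} = n - altdesB σ := by
    have := card_filter_add_card_filter_not (s := range n) (IsAltDes (bword σ))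
    rw [card_range] at this
    exact Nat.eq_sub_of_add_eq' this
  have hinner (i : Fin n) : ∑ ε, x ^ altdesB (insertMax σ i.castSucc ε) =
      (1 + x ^ 2) * if IsAltDes (bword σ) i then x ^ (altdesB σ - 1) else x ^ altdesB σ := by
    rw [sum_pow_altdesB_insertMax_of_lt σ (by simp), Fin.val_castSucc]
    split_ifs <;> rfl
  rw [Fin.sum_univ_castSucc, sum_pow_altdesB_insertMax_last, sum_congr rfl fun i _ => hinner i,
    ← mul_sum, Fin.sum_univ_eq_sum_range (fun j => if IsAltDes (bword σ) j then _ else _),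
    sum_ite, sum_const, sum_const, ← altdesB_eq_card, hcard, nsmul_eq_mul, nsmul_eq_mul]
  ring

end altdesB

theorem deriv_Bpoly (n : ℕ) (x : ℝ) :
    deriv (Bpoly n) x = ∑ σ : BSigned n, altdesB σ * x ^ (altdesB σ - 1) :=
  (HasDerivAt.fun_sum fun σ _ => hasDerivAt_pow (altdesB σ) x).deriv

theorem Bpoly_succ (n : ℕ) (x : ℝ) :
    Bpoly (n + 1) x = (1 + n + x + n * x ^ 2) * Bpoly n x
      + (1 - x) * (1 + x ^ 2) * deriv (Bpoly n) x := by
  rw [Bpoly, ← (insertMax_bijective (n := n)).sum_comp fun τ => x ^ altdesB τ,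
    Fintype.sum_prod_type, deriv_Bpoly, Bpoly, mul_sum, mul_sum, ← sum_add_distrib]
  refine sum_congr rfl fun σ _ => ?_
  rw [Fintype.sum_prod_type, sum_sum_pow_altdesB_insertMax, Nat.cast_sub (altdesB_le σ)]
  rcases altdesB σ with _ | a <;> push_cast [Nat.add_sub_cancel] <;> ring

theorem Bpoly_eq_gammaExpansion : ∀ n, Bpoly n = gammaExpansion n
  | 0 => funext fun x => by simp [Bpoly, altdesB, gammaExpansion, gammaTerm, xi]
  | n + 1 => funext fun x => by
    rw [Bpoly_succ, gammaExpansion_succ, Bpoly_eq_gammaExpansion n]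

/-- the alternating gamma expansion
`B̂_n(x) = Σ_{i=0}^{⌊n/2⌋} ξ_{n,i} (-4x)^i (1+x)^{n-2i}`. -/
theorem stmt11 (n : ℕ) (x : ℝ) :
    Bpoly n x =
      ∑ i ∈ Finset.range (n / 2 + 1),
        (xi n i : ℝ) * (-4 * x) ^ i * (1 + x) ^ (n - 2 * i) := by
  simp only [Bpoly_eq_gammaExpansion, gammaExpansion, gammaTerm, mul_assoc]
end

section
/- Let ξ_{n,i} be defined by ξ_{0,0} = 1, ξ_{0,i} = 0 for i ≠ 0, and ξ_{n+1,i} = (1+2n−6i)·ξ_{n,i} + (n−2i+2)·ξ_{n,i−1} − 4(i+1)·ξ_{n,i+1}, and set ξ_n(x) = Σ_{i=0}^{⌊n/2⌋} ξ_{n,i} x^i. Then ξ_n(−1) = n! for every n ≥ 0. -/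
open Finset

lemma xi_neg : ∀ (n : ℕ) (i : ℤ), i < 0 → xi n i = 0
  | 0, i, h => by rw [xi, if_neg (by omega)]
  | n + 1, i, h => by
    rw [xi]
    rcases eq_or_lt_of_le (show i ≤ -1 by omega) with h1 | h1
    · subst h1
      rw [xi_neg n (-1) h, xi_neg n (-1 - 1) (by omega)]
      norm_num
    · rw [xi_neg n i h, xi_neg n (i - 1) (by omega), xi_neg n (i + 1) (by omega)]; ring

lemma xi_big : ∀ (n : ℕ) (i : ℤ), (n : ℤ) < 2 * i → xi n i = 0
  | 0, i, h => by rw [xi, if_neg (by omega)]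
  | n + 1, i, h => by
    rw [xi]
    push_cast at h ⊢
    rw [xi_big n i (by omega), xi_big n (i + 1) (by omega)]
    by_cases h2 : (n : ℤ) < 2 * (i - 1)
    · rw [xi_big n (i - 1) h2]; ring
    · have : (n : ℤ) - 2 * i + 2 = 0 := by omega
      rw [show (↑n - 2 * i + 2) * xi n (i - 1) = 0 by rw [this]; ring]; ring

lemma sum_ext (n N M : ℕ) (hN : n < 2 * N) (hNM : N ≤ M) :
    ∑ i ∈ Finset.range M, xi n i * (-1) ^ i = ∑ i ∈ Finset.range N, xi n i * (-1) ^ i := by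
  rw [Finset.sum_subset (Finset.range_subset_range.2 hNM)]
  intro i hi hni
  simp only [Finset.mem_range, not_lt] at hni
  rw [xi_big n i (by omega)]
  ring

lemma key (n : ℕ) :
    ∑ i ∈ Finset.range (n + 3), xi (n + 1) i * (-1) ^ i
      = ((n : ℤ) + 1) * ∑ i ∈ Finset.range (n + 3), xi n i * (-1) ^ i := by
  have expand : ∑ i ∈ Finset.range (n + 3), xi (n + 1) i * (-1) ^ i
      = (∑ i ∈ Finset.range (n + 3), (1 + 2 * (n : ℤ) - 6 * i) * xi n i * (-1) ^ i)
        + (∑ i ∈ Finset.range (n + 3), ((n : ℤ) - 2 * i + 2) * xi n (i - 1) * (-1) ^ i)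
        - (∑ i ∈ Finset.range (n + 3), 4 * ((i : ℤ) + 1) * xi n (i + 1) * (-1) ^ i) := by
    rw [← Finset.sum_add_distrib, ← Finset.sum_sub_distrib]
    refine Finset.sum_congr rfl fun i _ => ?_
    rw [xi]; ring
  have T2 : ∑ i ∈ Finset.range (n + 3), ((n : ℤ) - 2 * i + 2) * xi n (i - 1) * (-1) ^ i
      = ∑ i ∈ Finset.range (n + 3), ((n : ℤ) - 2 * i) * xi n i * (-1) ^ (i + 1) := by
    rw [Finset.sum_range_succ' _ (n + 2)]
    rw [Finset.sum_range_succ _ (n + 2)]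
    have z1 : xi n (((0 : ℕ) : ℤ) - 1) = 0 := xi_neg n _ (by norm_num)
    have z2 : xi n (((n + 2 : ℕ) : ℤ)) = 0 := xi_big n _ (by push_cast; omega)
    rw [z1, z2]
    simp only [mul_zero, zero_mul, add_zero]
    refine Finset.sum_congr rfl fun i _ => ?_
    push_cast
    rw [show (i : ℤ) + 1 - 1 = i by ring]
    ring
  have T3 : ∑ i ∈ Finset.range (n + 3), 4 * ((i : ℤ) + 1) * xi n (i + 1) * (-1) ^ i
      = ∑ i ∈ Finset.range (n + 3), 4 * (i : ℤ) * xi n i * (-1) ^ (i + 1) := by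
    have h4 : ∑ i ∈ Finset.range (n + 4), 4 * (i : ℤ) * xi n i * (-1) ^ (i + 1)
        = ∑ i ∈ Finset.range (n + 3), 4 * ((i : ℤ) + 1) * xi n (i + 1) * (-1) ^ i := by
      rw [Finset.sum_range_succ' _ (n + 3)]
      simp only [Nat.cast_zero, mul_zero, zero_mul, add_zero]
      refine Finset.sum_congr rfl fun i _ => ?_
      push_cast
      ring
    have z3 : xi n (((n + 3 : ℕ) : ℤ)) = 0 := xi_big n _ (by push_cast; omega)
    rw [← h4, Finset.sum_range_succ _ (n + 3), z3]
    ring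
  rw [expand, T2, T3, Finset.mul_sum, ← Finset.sum_add_distrib, ← Finset.sum_sub_distrib]
  refine Finset.sum_congr rfl fun i _ => ?_
  rw [pow_succ]
  ring

lemma main_sum : ∀ n : ℕ, ∑ i ∈ Finset.range (n + 3), xi n i * (-1) ^ i = (n.factorial : ℤ)
  | 0 => by decide
  | n + 1 => by
    rw [show n + 1 + 3 = n + 4 from rfl,
      sum_ext (n + 1) (n + 3) (n + 4) (by omega) (by omega), key n, main_sum n,
      Nat.factorial_succ]
    push_cast
    ring

/-- `ξ_n(-1) = n!` for every `n ≥ 0`. -/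
theorem stmt18 (n : ℕ) :
    ∑ i ∈ Finset.range (n / 2 + 1), xi n i * (-1) ^ i = (n.factorial : ℤ) := by
  rw [← sum_ext n (n / 2 + 1) (n + 3) (by omega) (by omega), main_sum n]
end
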